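/- For any k ≥ 1, a permutation has exactly 2^(k−1) preimages under the bubblesort operator B if and only if it ends with its maximum and has exactly k left-to-right maxima. -/

import Mathlib

/-- One pass of bubblesort on a list of naturals. -/
def bpass : List ℕ → List ℕ
  | [] => []
  | [a] => [a]
  | a :: b :: l => if b < a then b :: bpass (a :: l) else a :: bpass (b :: l)

/-- The identity permutation 1 2 ... n as a list. -/
def idList (n : ℕ) : List ℕ := List.map (· + 1) (List.range n)

/-- `l` is (the word of) a permutation of size `n`, i.e. a rearrangement of 1,...,n. -/
def IsPermList (n : ℕ) (l : List ℕ) : Prop := l.Perm (idList n)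

/-- position `j` of `l` holds a left-to-right maximum. -/
def IsLTRMax (l : List ℕ) (j : ℕ) : Prop :=
  j < l.length ∧ ∀ i < j, l.getD i 0 < l.getD j 0

instance (l : List ℕ) (j : ℕ) : Decidable (IsLTRMax l j) := by
  unfold IsLTRMax; infer_instance

/-- the number of left-to-right maxima of `l`. -/
def ltrCount (l : List ℕ) : ℕ :=
  ((List.range l.length).filter fun j => decide (IsLTRMax l j)).length

/-- the length of the longest suffix of `l` consisting of left-to-right maxima. -/
def suffLen (l : List ℕ) : ℕ :=
  ((List.range l.length).takeWhile fun j => decide (IsLTRMax l (l.length - 1 - j))).length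

/-- `σ` is a node of the tree `T(π)` of iterated bubblesort preimages. -/
def IsNode (n : ℕ) (π σ : List ℕ) : Prop :=
  IsPermList n σ ∧ ∃ j, bpass^[j] σ = π

/-- `σ` is a node of `T(π)` at height `j` (j passes needed to reach π, and no fewer). -/
def IsNodeAt (n : ℕ) (π σ : List ℕ) (j : ℕ) : Prop :=
  IsPermList n σ ∧ bpass^[j] σ = π ∧ ∀ i < j, bpass^[i] σ ≠ π

/-- `τ` is a leaf: it has no child, i.e. no bubblesort preimage other than itself. -/
def IsLeafNode (n : ℕ) (τ : List ℕ) : Prop :=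
  ¬ ∃ ρ, IsPermList n ρ ∧ ρ ≠ τ ∧ bpass ρ = τ

/-- `T(π)` and `T(τ)` are isomorphic as rooted trees: there is a bijection between
their node sets sending root to root and commuting with the parent map `bpass`. -/
def TreeIso (n : ℕ) (π τ : List ℕ) : Prop :=
  ∃ φ : List ℕ → List ℕ,
    (∀ σ, IsNode n π σ → IsNode n τ (φ σ)) ∧
    (∀ σ σ', IsNode n π σ → IsNode n π σ' → φ σ = φ σ' → σ = σ') ∧
    (∀ ρ, IsNode n τ ρ → ∃ σ, IsNode n π σ ∧ φ σ = ρ) ∧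
    φ π = τ ∧
    (∀ σ, IsNode n π σ → σ ≠ π → φ (bpass σ) = bpass (φ σ))

/-!
A preimage of `c :: σ'` under one bubblesort pass is either `c :: ρ`, where `ρ` is a preimage of
`σ'` whose first entry exceeds `c`, or `x :: c :: m`, where `x :: m` is a preimage of `σ'` and
`x > c` (so `x` bubbles past `c`). Hence the number `N t σ` of preimages whose first entry exceeds
`t` satisfies `N t (c :: σ') = 2 * N c σ'` if `t < c` and `N t (c :: σ') = N t σ'` otherwise.
If `σ` ends with its maximum `m`, this recursion starts from `N t [m] = 1` for `t < m`, so `N`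
doubles at each left-to-right maximum above `t` except the last one. Otherwise there is no
preimage at all, since a bubblesort pass always moves the maximum to the end.
-/

theorem bpass_perm (l : List ℕ) : (bpass l).Perm l := by
  induction l using bpass.induct with
  | case1 => simp [bpass]
  | case2 a => simp [bpass]
  | case3 a b l h ih =>
    simp only [bpass, if_pos h]
    exact (ih.cons b).trans (List.Perm.swap a b l)
  | case4 a b l h ih =>
    simp only [bpass, if_neg h]
    exact ih.cons a

theorem bpass_ne_nil {l : List ℕ} (h : l ≠ []) : bpass l ≠ [] :=
  fun he => h (List.eq_nil_of_length_eq_zero ((bpass_perm l).length_eq ▸ he ▸ rfl))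

theorem le_of_getLast?_bpass {l : List ℕ} {y : ℕ} (hy : (bpass l).getLast? = some y) :
    ∀ x ∈ l, x ≤ y := by
  induction l using bpass.induct with
  | case1 => simp [bpass] at hy
  | case2 a => simp_all [bpass]
  | case3 a b l h ih =>
    obtain ⟨c, r, hcr⟩ := List.exists_cons_of_ne_nil (bpass_ne_nil (List.cons_ne_nil a l))
    rw [bpass, if_pos h, hcr, List.getLast?_cons_cons, ← hcr] at hy
    have := ih hy
    simp only [List.forall_mem_cons] at this ⊢
    exact ⟨this.1, h.le.trans this.1, this.2⟩
  | case4 a b l h ih =>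
    obtain ⟨c, r, hcr⟩ := List.exists_cons_of_ne_nil (bpass_ne_nil (List.cons_ne_nil b l))
    rw [bpass, if_neg h, hcr, List.getLast?_cons_cons, ← hcr] at hy
    have := ih hy
    simp only [List.forall_mem_cons] at this ⊢
    exact ⟨(not_lt.mp h).trans this.1, this⟩

/-- The bubblesort preimages of `σ` whose first entry exceeds `t`. -/
def preimagesAbove (t : ℕ) : List ℕ → List (List ℕ)
  | [] => []
  | [a] => if t < a then [[a]] else []
  | c :: s :: l =>
    (if t < c then (preimagesAbove c (s :: l)).map (c :: ·) else []) ++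
      (preimagesAbove (max t c) (s :: l)).map fun ρ => ρ.headI :: c :: ρ.tail

theorem bpass_eq_of_mem_preimagesAbove {t : ℕ} {σ τ : List ℕ}
    (h : τ ∈ preimagesAbove t σ) : bpass τ = σ ∧ t < τ.headI := by
  induction σ generalizing t τ with
  | nil => simp [preimagesAbove] at h
  | cons c σ' ih =>
    rcases σ' with _ | ⟨s, l⟩
    · by_cases htc : t < c <;> simp_all [preimagesAbove, bpass]
    · simp only [preimagesAbove, List.mem_append, List.mem_map] at h
      rcases h with h | ⟨ρ, hρ, rfl⟩
      · split_ifs at h with htc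
        · obtain ⟨ρ, hρ, rfl⟩ := List.mem_map.mp h
          obtain ⟨hb, hlt⟩ := ih hρ
          rcases ρ with _ | ⟨x, m⟩
          · simp [bpass] at hb
          · simp only [List.headI] at hlt
            simp [bpass, hb, htc, hlt.le]
        · simp at h
      · obtain ⟨hb, hlt⟩ := ih hρ
        rcases ρ with _ | ⟨x, m⟩
        · simp [bpass] at hb
        · simp only [List.headI, max_lt_iff] at hlt
          simp [bpass, hb, hlt]

theorem mem_preimagesAbove_of_bpass_eq {t : ℕ} {σ τ : List ℕ} (hσ : σ.Nodup)
    (hb : bpass τ = σ) (ht : t < τ.headI) : τ ∈ preimagesAbove t σ := by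
  induction τ using bpass.induct generalizing t σ with
  | case1 => simp [List.headI] at ht
  | case2 a => subst hb; simp_all [bpass, preimagesAbove]
  | case3 x y m hyx ih =>
    obtain ⟨s, l, hsl⟩ := List.exists_cons_of_ne_nil (bpass_ne_nil (List.cons_ne_nil x m))
    rw [bpass, if_pos hyx, hsl] at hb
    subst hb
    simp only [List.headI] at ht
    have := ih hσ.of_cons hsl (t := max t y) (by simp [List.headI]; omega)
    simp only [preimagesAbove, List.mem_append, List.mem_map]
    exact .inr ⟨x :: m, this, rfl⟩
  | case4 x y m hyx ih =>
    obtain ⟨s, l, hsl⟩ := List.exists_cons_of_ne_nil (bpass_ne_nil (List.cons_ne_nil y m))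
    rw [bpass, if_neg hyx, hsl] at hb
    subst hb
    simp only [List.headI] at ht
    have hxy : x ≠ y := by
      rintro rfl
      exact (List.nodup_cons.mp hσ).1 (hsl ▸ (bpass_perm (x :: m)).mem_iff.mpr (by simp))
    have := ih hσ.of_cons hsl (t := x) (by simp [List.headI]; omega)
    simp only [preimagesAbove, List.mem_append, List.mem_map, if_pos ht]
    exact .inl ⟨y :: m, this, rfl⟩

theorem mem_preimagesAbove {t : ℕ} {σ τ : List ℕ} (hσ : σ.Nodup) :
    τ ∈ preimagesAbove t σ ↔ bpass τ = σ ∧ t < τ.headI :=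
  ⟨bpass_eq_of_mem_preimagesAbove, fun h => mem_preimagesAbove_of_bpass_eq hσ h.1 h.2⟩

theorem nodup_preimagesAbove (t : ℕ) (σ : List ℕ) : (preimagesAbove t σ).Nodup := by
  induction σ generalizing t with
  | nil => simp [preimagesAbove]
  | cons c σ' ih =>
    rcases σ' with _ | ⟨s, l⟩
    · by_cases htc : t < c <;> simp [preimagesAbove, htc]
    have ne_nil {t' ρ} (h : ρ ∈ preimagesAbove t' (s :: l)) : ρ ≠ [] := by
      rintro rfl; simpa [bpass] using (bpass_eq_of_mem_preimagesAbove h).1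
    simp only [preimagesAbove]
    refine List.Nodup.append ?_ ((ih _).map_on ?_) ?_
    · split_ifs
      · exact (ih c).map List.cons_injective
      · exact List.nodup_nil
    · intro ρ hρ ρ' hρ' he
      obtain ⟨x, m, rfl⟩ := List.exists_cons_of_ne_nil (ne_nil hρ)
      obtain ⟨x', m', rfl⟩ := List.exists_cons_of_ne_nil (ne_nil hρ')
      simpa using he
    -- the two blocks are told apart by their first entry: `c`, resp. something above `c`
    · intro τ hl hr
      split_ifs at hl
      · obtain ⟨ρ, -, rfl⟩ := List.mem_map.mp hl
        obtain ⟨ρ', hρ', he⟩ := List.mem_map.mp hr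
        obtain ⟨x, m, rfl⟩ := List.exists_cons_of_ne_nil (ne_nil hρ')
        have := (bpass_eq_of_mem_preimagesAbove hρ').2
        simp only [List.headI, List.tail, List.cons.injEq] at he this
        omega
      · simp at hl

/-- The number of left-to-right maxima of `t :: l` other than `t`. -/
def ltrAbove (t : ℕ) : List ℕ → ℕ
  | [] => 0
  | a :: l => (if t < a then 1 else 0) + ltrAbove (max t a) l

theorem one_le_ltrAbove {t x : ℕ} {l : List ℕ} (hx : x ∈ l) (htx : t < x) : 1 ≤ ltrAbove t l := by
  induction l generalizing t with
  | nil => simp at hx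
  | cons a l ih =>
    by_cases hta : t < a
    · simp [ltrAbove, hta]
    · rcases List.mem_cons.mp hx with rfl | hx
      · exact absurd htx hta
      · simpa [ltrAbove, hta, max_eq_left (not_lt.mp hta)] using ih hx htx

theorem length_preimagesAbove {t m : ℕ} {σ : List ℕ} (hσ : σ.Nodup) (hm : σ.getLast? = some m)
    (hmax : ∀ x ∈ σ, x ≤ m) (htm : t < m) :
    (preimagesAbove t σ).length = 2 ^ (ltrAbove t σ - 1) := by
  induction σ generalizing t with
  | nil => simp at hm
  | cons c σ' ih =>
    rcases σ' with _ | ⟨s, l⟩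
    · simp_all [preimagesAbove, ltrAbove]
    rw [List.getLast?_cons_cons] at hm
    have hmax' : ∀ x ∈ s :: l, x ≤ m := fun x hx => hmax x (.tail c hx)
    have hms : m ∈ s :: l := List.mem_of_getLast? hm
    have hcm : c < m := (hmax c (.head _)).lt_of_ne fun h => (List.nodup_cons.mp hσ).1 (h ▸ hms)
    have ih' {t'} (ht' : t' < m) := ih hσ.of_cons hm hmax' ht'
    rw [preimagesAbove, List.length_append, List.length_map,
      show ltrAbove t (c :: s :: l) = (if t < c then 1 else 0) + ltrAbove (max t c) (s :: l) from rfl]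
    by_cases htc : t < c
    · have := one_le_ltrAbove hms hcm
      rw [if_pos htc, if_pos htc, List.length_map, max_eq_right htc.le, ih' hcm,
        ← two_mul, ← pow_succ']
      congr 1
      omega
    · rw [if_neg htc, if_neg htc, max_eq_left (not_lt.mp htc), ih' htm]
      simp

theorem countP_range_ltrAbove (t : ℕ) (l : List ℕ) :
    (List.range l.length).countP
      (fun j => t < l.getD j 0 ∧ ∀ i < j, l.getD i 0 < l.getD j 0) = ltrAbove t l := by
  induction l generalizing t with
  | nil => simp [ltrAbove]
  | cons a l ih =>
    rw [List.length_cons, List.range_succ_eq_map, List.countP_cons, List.countP_map, ltrAbove,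
      ← ih (max t a), add_comm]
    congr 1
    · simp
    · refine List.countP_congr fun j _ => ?_
      simp only [Function.comp_apply, List.getD_cons_succ, List.getD_cons_zero,
        Nat.forall_lt_succ_left, max_lt_iff, and_assoc]

theorem ltrCount_eq_ltrAbove {l : List ℕ} (hpos : ∀ x ∈ l, 0 < x) :
    ltrCount l = ltrAbove 0 l := by
  rw [← countP_range_ltrAbove, List.countP_eq_length_filter, ltrCount]
  congr 1
  refine List.filter_congr fun j hj => ?_
  rw [List.mem_range] at hj
  simp [IsLTRMax, hj, hpos _ (List.getElem_mem hj)]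

theorem one_le_ltrCount {l : List ℕ} (hl : l ≠ []) : 1 ≤ ltrCount l :=
  List.length_pos_of_mem (a := 0) <| by simp [IsLTRMax, List.length_pos_of_ne_nil hl]

theorem mem_idList {n x : ℕ} : x ∈ idList n ↔ 0 < x ∧ x ≤ n := by
  simp only [idList, List.mem_map, List.mem_range]
  constructor
  · rintro ⟨i, hi, rfl⟩
    omega
  · exact fun h => ⟨x - 1, by omega, by omega⟩

theorem nodup_idList (n : ℕ) : (idList n).Nodup :=
  List.nodup_range.map (add_left_injective 1)

theorem IsPermList.mem_iff {n x : ℕ} {σ : List ℕ} (hσ : IsPermList n σ) :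
    x ∈ σ ↔ 0 < x ∧ x ≤ n :=
  List.Perm.mem_iff hσ |>.trans mem_idList

theorem IsPermList.nodup {n : ℕ} {σ : List ℕ} (hσ : IsPermList n σ) : σ.Nodup :=
  List.Perm.nodup_iff hσ |>.mpr (nodup_idList n)

theorem setOf_bpass_eq_eq_preimagesAbove {n : ℕ} {σ : List ℕ} (hn : 0 < n)
    (hσ : IsPermList n σ) :
    {τ | IsPermList n τ ∧ bpass τ = σ} = {τ | τ ∈ preimagesAbove 0 σ} := by
  ext τ
  rw [Set.mem_ofPred_eq, Set.mem_ofPred_eq, mem_preimagesAbove hσ.nodup]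
  constructor
  · rintro ⟨-, hb⟩
    refine ⟨hb, ?_⟩
    rcases τ with _ | ⟨x, m⟩
    · simpa [← hb, bpass] using hσ.mem_iff.mpr ⟨hn, le_rfl⟩
    · exact (hσ.mem_iff.mp (hb ▸ (bpass_perm _).mem_iff.mpr (.head m))).1
  · rintro ⟨hb, -⟩
    exact ⟨(hb ▸ bpass_perm τ).symm.trans hσ, hb⟩

theorem setOf_bpass_eq_eq_empty {n : ℕ} {σ : List ℕ} (hn : 0 < n) (hσ : IsPermList n σ)
    (hlast : σ.getLast? ≠ some n) : {τ | IsPermList n τ ∧ bpass τ = σ} = ∅ := by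
  refine Set.eq_empty_of_forall_notMem fun τ ⟨hτ, hb⟩ => hlast ?_
  obtain ⟨y, hy⟩ := Option.ne_none_iff_exists'.mp (List.getLast?_eq_none_iff.not.mpr
    (List.ne_nil_of_mem (hσ.mem_iff.mpr ⟨hn, le_rfl⟩)))
  have hny : n ≤ y := le_of_getLast?_bpass (hb ▸ hy) n (hτ.mem_iff.mpr ⟨hn, le_rfl⟩)
  have hyn : y ≤ n := (hσ.mem_iff.mp (List.mem_of_getLast? hy)).2
  rw [hy, le_antisymm hyn hny]

theorem ncard_setOf_bpass_eq {n : ℕ} {σ : List ℕ} (hn : 0 < n) (hσ : IsPermList n σ) :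
    {τ | IsPermList n τ ∧ bpass τ = σ}.ncard =
      if σ.getLast? = some n then 2 ^ (ltrCount σ - 1) else 0 := by
  split_ifs with hlast
  · rw [setOf_bpass_eq_eq_preimagesAbove hn hσ, ← List.coe_toFinset, Set.ncard_coe_finset,
      List.toFinset_card_of_nodup (nodup_preimagesAbove 0 σ),
      length_preimagesAbove hσ.nodup hlast (fun x hx => (hσ.mem_iff.mp hx).2) hn,
      ltrCount_eq_ltrAbove fun x hx => (hσ.mem_iff.mp hx).1]
  · rw [setOf_bpass_eq_eq_empty hn hσ hlast, Set.ncard_empty]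

/-- For `k ≥ 1`, a permutation of size `n ≥ 1` has exactly `2^(k-1)` bubblesort preimages
iff it ends with its maximum and has exactly `k` left-to-right maxima. -/
theorem stmt_6 (n k : ℕ) (hn : 1 ≤ n) (hk : 1 ≤ k) (σ : List ℕ) (hσ : IsPermList n σ) :
    Set.ncard {τ : List ℕ | IsPermList n τ ∧ bpass τ = σ} = 2 ^ (k - 1) ↔
      (σ.getLast? = some n ∧ ltrCount σ = k) := by
  rw [ncard_setOf_bpass_eq hn hσ]
  split_ifs with hlast
  · have : 1 ≤ ltrCount σ := one_le_ltrCount (List.ne_nil_of_mem (hσ.mem_iff.mpr ⟨hn, le_rfl⟩))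
    rw [Nat.pow_right_inj one_lt_two]
    simp only [hlast, true_and]
    omega
  · simpa [hlast] using (pow_pos two_pos (k - 1)).ne
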